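/- Let ψ : ℝ₊ → (0,1] satisfy, for each R, 1/ψ(R) = Σ_{j: d_j ≤ R} 1/(1 + b_j − ψ(R)) + C(ψ(R), R), where b_j = d_j^β/(Tr^β), 0 < d_1 ≤ d_2 ≤ ... with d_j → ∞, Σ_j 1/b_j = ∞ (β > 2 and C(ψ,R) = 2πλr²∫_{R/r}^∞ s/(s^β/T + 1 − ψ)ds → 0 as R → ∞ uniformly in ψ ∈ [0,1−ε]). Suppose ψ_∞ ∈ (0,1) is the unique solution of 1/ψ = Σ_j 1/(1 + b_j − ψ) (convergent series). Then ψ(R) → ψ_∞ as R → ∞. -/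

import Mathlib

/-!
For `x ≤ 1` put `G x = ∑ⱼ 1 / (1 + bⱼ - x)` with `bⱼ = dⱼ ^ β / (T r ^ β)`. The defect
`G x - 1 / x` is strictly increasing on `(0, 1]` and vanishes at `ψ∞`. By the
partial-information equation, its value at `ψ(R)` is the tail `∑_{dⱼ > R}` of `G (ψ R)` minus
the integral term. Both tend to `0` uniformly in `ψ(R) ≤ 1`, being dominated by the tail of
`∑ 1 / bⱼ` and by `T (R / r) ^ (2 - β) / (β - 2)`. Strict monotonicity then forces
`ψ(R) → ψ∞`.
-/

open MeasureTheory Real Filter Topology Set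

theorem tendsto_of_strictMonoOn_of_tendsto_comp {α β γ : Type*} [LinearOrder α]
    [TopologicalSpace α] [OrderTopology α] [DenselyOrdered α] [NoMinOrder α] [NoMaxOrder α]
    [LinearOrder β] [TopologicalSpace β] [OrderTopology β]
    {φ : α → β} {s : Set α} (hφ : StrictMonoOn φ s) {x₀ : α} (hs : s ∈ 𝓝 x₀)
    {f : γ → α} {l : Filter γ} (hf : ∀ᶠ c in l, f c ∈ s)
    (h : Tendsto (φ ∘ f) l (𝓝 (φ x₀))) : Tendsto f l (𝓝 x₀) := by
  have hx₀ := mem_of_mem_nhds hs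
  refine tendsto_order.2 ⟨fun a ha => ?_, fun a ha => ?_⟩
  · obtain ⟨y, ⟨hay, hyx⟩, hy⟩ :=
      (Eventually.and (Ioo_mem_nhdsLT ha) (mem_nhdsWithin_of_mem_nhds hs)).exists
    filter_upwards [hf, (tendsto_order.1 h).1 _ (hφ hy hx₀ hyx)] with c hc hlt
    exact hay.trans ((hφ.lt_iff_lt hy hc).1 hlt)
  · obtain ⟨y, ⟨hxy, hya⟩, hy⟩ :=
      (Eventually.and (Ioo_mem_nhdsGT ha) (mem_nhdsWithin_of_mem_nhds hs)).exists
    filter_upwards [hf, (tendsto_order.1 h).2 _ (hφ hx₀ hy hxy)] with c hc hlt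
    exact ((hφ.lt_iff_lt hc hy).1 hlt).trans hya

theorem tsum_subtype_le_of_subset {ι : Type*} {f : ι → ℝ} (hf0 : ∀ j, 0 ≤ f j)
    (hf : Summable f) {s t : Set ι} (hst : s ⊆ t) : ∑' j : s, f j ≤ ∑' j : t, f j := by
  rw [tsum_subtype, tsum_subtype]
  exact (hf.indicator s).tsum_le_tsum (Set.indicator_le_indicator_of_subset hst hf0)
    (hf.indicator t)

theorem tendsto_tsum_not_le_atTop_zero {ι : Type*} {f : ι → ℝ} (hf0 : ∀ j, 0 ≤ f j)
    (hf : Summable f) (d : ι → ℝ) :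
    Tendsto (fun R => ∑' j : {j // ¬ d j ≤ R}, f j) atTop (𝓝 0) := by
  refine tendsto_order.2
    ⟨fun a ha => .of_forall fun R => ha.trans_le (tsum_nonneg fun j => hf0 j), fun ε hε => ?_⟩
  obtain ⟨s, hs⟩ := ((tendsto_order.1 (tendsto_tsum_compl_atTop_zero f)).2 ε hε).exists
  obtain ⟨M, hM⟩ := (s.finite_toSet.image d).bddAbove
  filter_upwards [eventually_ge_atTop M] with R hR
  have hsub : {j | ¬ d j ≤ R} ⊆ {j | j ∉ s} := fun j hj hjs =>
    hj ((hM (mem_image_of_mem d hjs)).trans hR)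
  exact (tsum_subtype_le_of_subset hf0 hf hsub).trans_lt hs

section Load

variable {ι : Type*} {b : ι → ℝ} {x : ℝ}

theorem one_div_one_add_sub_le (hb : ∀ j, 0 < b j) (hx : x ≤ 1) (j : ι) :
    1 / (1 + b j - x) ≤ 1 / b j :=
  one_div_le_one_div_of_le (hb j) (by linarith)

theorem one_div_one_add_sub_pos (hb : ∀ j, 0 < b j) (hx : x ≤ 1) (j : ι) :
    0 < 1 / (1 + b j - x) :=
  one_div_pos.2 (by linarith [hb j])

theorem summable_one_div_one_add_sub (hb : ∀ j, 0 < b j) (hs : Summable fun j => 1 / b j)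
    (hx : x ≤ 1) : Summable fun j => 1 / (1 + b j - x) :=
  hs.of_nonneg_of_le (fun j => (one_div_one_add_sub_pos hb hx j).le)
    (one_div_one_add_sub_le hb hx)

theorem monotoneOn_tsum_one_div_one_add_sub (hb : ∀ j, 0 < b j)
    (hs : Summable fun j => 1 / b j) :
    MonotoneOn (fun x => ∑' j, 1 / (1 + b j - x)) (Iic 1) := fun x _ y hy hxy =>
  (summable_one_div_one_add_sub hb hs (hxy.trans hy)).tsum_le_tsum
    (fun j => one_div_le_one_div_of_le (by linarith [hb j, mem_Iic.1 hy]) (by linarith))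
    (summable_one_div_one_add_sub hb hs hy)

theorem strictMonoOn_tsum_one_div_one_add_sub_sub_one_div (hb : ∀ j, 0 < b j)
    (hs : Summable fun j => 1 / b j) :
    StrictMonoOn (fun x => (∑' j, 1 / (1 + b j - x)) - 1 / x) (Ioc 0 1) := by
  have hinv : StrictMonoOn (fun x : ℝ => -(1 / x)) (Ioc 0 1) := fun x hx y _ hxy =>
    neg_lt_neg (one_div_lt_one_div_of_lt hx.1 hxy)
  simpa only [neg_add_eq_sub] using
    hinv.add_monotone ((monotoneOn_tsum_one_div_one_add_sub hb hs).mono Ioc_subset_Iic_self)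

theorem tendsto_tsum_not_le_one_div_one_add_sub (hb : ∀ j, 0 < b j)
    (hs : Summable fun j => 1 / b j) (d : ι → ℝ) {g : ℝ → ℝ} (hg : ∀ R, g R ≤ 1) :
    Tendsto (fun R => ∑' j : {j // ¬ d j ≤ R}, 1 / (1 + b j - g R)) atTop (𝓝 0) :=
  squeeze_zero (fun R => tsum_nonneg fun j => (one_div_one_add_sub_pos hb (hg R) j).le)
    (fun R => ((summable_one_div_one_add_sub hb hs (hg R)).subtype _).tsum_le_tsum
      (fun j => one_div_one_add_sub_le hb (hg R) j) (hs.subtype _))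
    (tendsto_tsum_not_le_atTop_zero (fun j => (one_div_pos.2 (hb j)).le) hs d)

end Load

section Integral

variable {β T x : ℝ}

theorem div_rpow_div_add_one_sub_le (hT : 0 < T) (hx : x ≤ 1) {s : ℝ} (hs : 0 < s) :
    s / (s ^ β / T + 1 - x) ≤ T * s ^ (1 - β) := by
  have hsβ : 0 < s ^ β / T := div_pos (rpow_pos_of_pos hs β) hT
  calc s / (s ^ β / T + 1 - x) ≤ s / (s ^ β / T) :=
        div_le_div_of_nonneg_left hs.le hsβ (by linarith)
    _ = T * s ^ (1 - β) := by
        rw [rpow_sub hs, rpow_one, div_div_eq_mul_div]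
        ring

theorem div_rpow_div_add_one_sub_nonneg (hT : 0 < T) (hx : x ≤ 1) {s : ℝ} (hs : 0 < s) :
    0 ≤ s / (s ^ β / T + 1 - x) :=
  div_nonneg hs.le (by linarith [div_pos (rpow_pos_of_pos hs β) hT])

theorem integral_Ioi_div_rpow_div_add_one_sub_le (hβ : 2 < β) (hT : 0 < T) (hx : x ≤ 1)
    {M : ℝ} (hM : 0 < M) :
    ∫ s in Ioi M, s / (s ^ β / T + 1 - x) ≤ T / (β - 2) * M ^ (2 - β) := by
  have hβ' : 1 - β < -1 := by linarith
  calc ∫ s in Ioi M, s / (s ^ β / T + 1 - x) ≤ ∫ s in Ioi M, T * s ^ (1 - β) :=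
        integral_mono_of_nonneg
          ((ae_restrict_iff' measurableSet_Ioi).2 <| .of_forall fun s hs =>
            div_rpow_div_add_one_sub_nonneg hT hx (hM.trans hs))
          ((integrableOn_Ioi_rpow_of_lt hβ' hM).const_mul T)
          ((ae_restrict_iff' measurableSet_Ioi).2 <| .of_forall fun s hs =>
            div_rpow_div_add_one_sub_le hT hx (hM.trans hs))
    _ = T / (β - 2) * M ^ (2 - β) := by
        rw [integral_const_mul, integral_Ioi_rpow_of_lt hβ' hM,
          show (1 : ℝ) - β + 1 = -(β - 2) by ring, show (2 : ℝ) - β = -(β - 2) by ring,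
          neg_div_neg_eq]
        ring

theorem tendsto_integral_Ioi_div_rpow_div_add_one_sub (hβ : 2 < β) (hT : 0 < T) {r : ℝ}
    (hr : 0 < r) {g : ℝ → ℝ} (hg : ∀ R, g R ≤ 1) :
    Tendsto (fun R => ∫ s in Ioi (R / r), s / (s ^ β / T + 1 - g R)) atTop (𝓝 0) := by
  have hbound : Tendsto (fun R => T / (β - 2) * (R / r) ^ (2 - β)) atTop (𝓝 0) := by
    simpa only [neg_sub, mul_zero, Function.comp_def, id] using
      ((tendsto_rpow_neg_atTop (by linarith : 0 < β - 2)).comp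
        (tendsto_id.atTop_div_const hr)).const_mul (T / (β - 2))
  refine squeeze_zero' ?_ ?_ hbound
  · filter_upwards [eventually_gt_atTop 0] with R hR
    exact setIntegral_nonneg measurableSet_Ioi fun s hs =>
      div_rpow_div_add_one_sub_nonneg hT (hg R) ((div_pos hR hr).trans hs)
  · filter_upwards [eventually_gt_atTop 0] with R hR
    exact integral_Ioi_div_rpow_div_add_one_sub_le hβ hT (hg R) (div_pos hR hr)

end Integral

theorem stmt_18_general (β lam T r : ℝ) (hβ : 2 < β) (hT : 0 < T)
    (hr : 0 < r)
    (d : ℕ → ℝ) (hd : ∀ j, 0 < d j)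
    (hsummable : Summable fun j : ℕ => (d j) ^ (-β))
    (ψ : ℝ → ℝ) (hψ : ∀ R, ψ R ∈ Set.Ioc (0 : ℝ) 1)
    (hfix : ∀ R > (0 : ℝ),
      1 / ψ R = (∑' j : {j : ℕ // d j ≤ R}, 1 / (1 + d j.1 ^ β / (T * r ^ β) - ψ R))
        + 2 * π * lam * r ^ 2 * ∫ s in Set.Ioi (R / r), s / (s ^ β / T + 1 - ψ R))
    (ψinf : ℝ) (hψinf : ψinf ∈ Set.Ioo (0 : ℝ) 1)
    (hfixinf : 1 / ψinf = ∑' j : ℕ, 1 / (1 + d j ^ β / (T * r ^ β) - ψinf)) :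
    Filter.Tendsto ψ Filter.atTop (nhds ψinf) := by
  set b : ℕ → ℝ := fun j => d j ^ β / (T * r ^ β)
  have hb : ∀ j, 0 < b j := fun j =>
    div_pos (rpow_pos_of_pos (hd j) β) (mul_pos hT (rpow_pos_of_pos hr β))
  have hsb : Summable fun j => 1 / b j := (hsummable.mul_left (T * r ^ β)).congr fun j => by
    rw [one_div_div, rpow_neg (hd j).le, div_eq_mul_inv]
  have hψ1 : ∀ R, ψ R ≤ 1 := fun R => (hψ R).2
  have hdefect : ∀ R > 0, (∑' j, 1 / (1 + b j - ψ R)) - 1 / ψ R =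
      (∑' j : {j // ¬ d j ≤ R}, 1 / (1 + b j - ψ R)) -
        2 * π * lam * r ^ 2 * ∫ s in Ioi (R / r), s / (s ^ β / T + 1 - ψ R) := fun R hR => by
    have hsplit : (∑' j : {j // d j ≤ R}, 1 / (1 + b j - ψ R)) +
        (∑' j : {j // ¬ d j ≤ R}, 1 / (1 + b j - ψ R)) = ∑' j, 1 / (1 + b j - ψ R) :=
      (summable_one_div_one_add_sub hb hsb (hψ1 R)).tsum_subtype_add_tsum_subtype_compl _
    rw [← hsplit, hfix R hR]
    ring
  have hlim : Tendsto (fun R => (∑' j, 1 / (1 + b j - ψ R)) - 1 / ψ R) atTop (𝓝 0) := by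
    have h := (tendsto_tsum_not_le_one_div_one_add_sub hb hsb d hψ1).sub
      ((tendsto_integral_Ioi_div_rpow_div_add_one_sub hβ hT hr hψ1).const_mul
        (2 * π * lam * r ^ 2))
    rw [mul_zero, sub_zero] at h
    refine h.congr' ?_
    filter_upwards [eventually_gt_atTop 0] with R hR
    exact (hdefect R hR).symm
  refine tendsto_of_strictMonoOn_of_tendsto_comp
    (strictMonoOn_tsum_one_div_one_add_sub_sub_one_div hb hsb)
    (mem_of_superset (Ioo_mem_nhds hψinf.1 hψinf.2) Ioo_subset_Ioc_self) (.of_forall hψ) ?_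
  rwa [Function.comp_def, ← hfixinf, sub_self]

/-- Continuity at infinity of the proportionally fair MAP: as the radius `R` of the
deterministic stopping set `B₀(R)` tends to infinity, the partial-information fixed
point `ψ(R)` converges to the full-information fixed point `ψ∞`. -/
theorem stmt_18 (β lam T r : ℝ) (hβ : 2 < β) (hlam : 0 < lam) (hT : 0 < T)
    (hr : 0 < r)
    (d : ℕ → ℝ) (hd : ∀ j, 0 < d j) (hdmono : Monotone d)
    (htend : Filter.Tendsto d Filter.atTop Filter.atTop)
    (hsummable : Summable fun j : ℕ => (d j) ^ (-β))
    (ψ : ℝ → ℝ) (hψ : ∀ R, ψ R ∈ Set.Ioc (0 : ℝ) 1)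
    (hfix : ∀ R > (0 : ℝ),
      1 / ψ R = (∑' j : {j : ℕ // d j ≤ R}, 1 / (1 + d j.1 ^ β / (T * r ^ β) - ψ R))
        + 2 * π * lam * r ^ 2 * ∫ s in Set.Ioi (R / r), s / (s ^ β / T + 1 - ψ R))
    (ψinf : ℝ) (hψinf : ψinf ∈ Set.Ioo (0 : ℝ) 1)
    (hfixinf : 1 / ψinf = ∑' j : ℕ, 1 / (1 + d j ^ β / (T * r ^ β) - ψinf))
    (huniq : ∀ x ∈ Set.Ioo (0 : ℝ) 1,
      1 / x = (∑' j : ℕ, 1 / (1 + d j ^ β / (T * r ^ β) - x)) → x = ψinf) :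
    Filter.Tendsto ψ Filter.atTop (nhds ψinf) :=
  stmt_18_general β lam T r hβ hT hr d hd hsummable ψ hψ hfix ψinf hψinf hfixinf
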